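/- arXiv:2601.14206 — 2 statements merged into one kernel-verified Lean document; each statement's English description precedes it below -/
import Mathlib

section
/- Let G be a finite simple graph on the vertex set V in which every vertex has degree at most Δ, and let c > 1 and d ≥ 1 be integers. For each i ∈ V let I_i ⊆ V be a subset such that |I_i| = c, every j ∈ I_i is within distance d of i, and I_{i₁} ≠ I_{i₂} whenever i₁ ≠ i₂. Set Q†_i = ∏_{j∈I_i} s†_j (the operators s†_j commute, so this product is well defined) and Q† = ∑_{i∈V} Q†_i. Then there exists an invertible linear operator M on the state space that is δ-locality-preserving with δ = 8d(Δ^{4d}+1), and that satisfies M |0̄⟩ = |0̄⟩ and M (S† |0̄⟩) = Q† |0̄⟩. -/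
open scoped BigOperators
set_option linter.unusedSectionVars false

noncomputable section

/-- The state space of a collection of qubits indexed by `V`: the complex vector space of
functions from configurations `V → Bool` to `ℂ`. -/
abbrev QState (V : Type*) := (V → Bool) → ℂ

section Defs

variable {V : Type*} [Fintype V] [DecidableEq V]

/-- The standard basis vector associated to the configuration `f`. -/
def basisVec (f : V → Bool) : QState V := fun g => if g = f then 1 else 0

/-- The creation operator `s†_i` at site `i`. -/
def creOp (i : V) : Module.End ℂ (QState V) where
  toFun ψ := fun g => if g i = true then ψ (Function.update g i false) else 0
  map_add' ψ φ := by funext g; by_cases h : g i = true <;> simp [h]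
  map_smul' a ψ := by funext g; by_cases h : g i = true <;> simp [h]

/-- The annihilation operator `s_i` at site `i`. -/
def annOp (i : V) : Module.End ℂ (QState V) where
  toFun ψ := fun g => if g i = false then ψ (Function.update g i true) else 0
  map_add' ψ φ := by funext g; by_cases h : g i = false <;> simp [h]
  map_smul' a ψ := by funext g; by_cases h : g i = false <;> simp [h]

@[simp] lemma creOp_apply (i : V) (ψ : QState V) (g : V → Bool) :
    creOp i ψ g = if g i = true then ψ (Function.update g i false) else 0 := rfl

variable (V)

/-- The vacuum `|0̄⟩`: the basis vector of the all-false configuration. -/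
def vac : QState V := basisVec (fun _ => false)

/-- The total raising operator `S† = ∑ i, s†_i`. -/
def Sdag : Module.End ℂ (QState V) := ∑ i : V, creOp i

/-- The number operator `N̂ = ∑ i, s†_i s_i`. -/
def numOp : Module.End ℂ (QState V) := ∑ i : V, creOp i * annOp i

/-- The unnormalized Dicke state `|W^p⟩ = (S†)^p |0̄⟩`. -/
def WState (p : ℕ) : QState V := ((Sdag V) ^ p) (vac V)

variable {V}

/-- Creation operators at different sites commute. -/
lemma creOp_commute (i j : V) : Commute (creOp (V := V) i) (creOp j) := by
  rcases eq_or_ne i j with rfl | hij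
  · exact Commute.refl _
  · show creOp i * creOp j = creOp j * creOp i
    refine LinearMap.ext fun ψ => funext fun g => ?_
    simp only [Module.End.mul_apply, creOp_apply]
    by_cases hi : g i = true <;> by_cases hj : g j = true <;>
      simp [hi, hj, Function.update_of_ne hij, Function.update_of_ne hij.symm,
        Function.update_comm hij]

/-- The product `∏_{j ∈ Y} s†_j` of creation operators over a finite set `Y` of sites
(the operators commute, so the product is well defined; the empty product is the identity). -/
def creProd (Y : Finset V) : Module.End ℂ (QState V) :=
  Y.noncommProd creOp fun a _ b _ _ => creOp_commute a b

/-- The operator `O` is supported on the set of sites `X`. -/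
def SupportedOn (O : Module.End ℂ (QState V)) (X : Set V) : Prop :=
  (∀ f g : V → Bool, (∃ i ∉ X, f i ≠ g i) → O (basisVec f) g = 0) ∧
  (∀ f f' g g' : V → Bool,
    (∀ i ∈ X, f i = f' i) → (∀ i ∈ X, g i = g' i) →
    (∀ i ∉ X, f i = g i) → (∀ i ∉ X, f' i = g' i) →
    O (basisVec f) g = O (basisVec f') g')

/-- An operator is `k`-local if it is a finite sum of operators each supported
on a subset of at most `k` sites. -/
def IsKLocal (k : ℕ) (O : Module.End ℂ (QState V)) : Prop :=
  ∃ (n : ℕ) (h : Fin n → Module.End ℂ (QState V)) (X : Fin n → Finset V),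
    (∀ t, SupportedOn (h t) ↑(X t)) ∧ (∀ t, (X t).card ≤ k) ∧ O = ∑ t, h t

/-- Vertices `i` and `j` are within distance `r` in the graph `G`:
they are joined by a walk of length at most `r`. -/
def WithinDist (G : SimpleGraph V) (r : ℕ) (i j : V) : Prop :=
  ∃ w : G.Walk i j, w.length ≤ r

/-- The ball of radius `r` around vertex `i` in the graph `G`. -/
def gball (G : SimpleGraph V) (i : V) (r : ℕ) : Set V := {j | WithinDist G r i j}

/-- `diam(X) ≤ R` with respect to `G`: every two vertices of `X` are within distance `R - 1`. -/
def GDiamLE (G : SimpleGraph V) (X : Finset V) (R : ℕ) : Prop :=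
  ∀ i ∈ X, ∀ j ∈ X, WithinDist G (R - 1) i j

/-- `H` is a Hamiltonian of range `R` with respect to the graph `G`: a finite sum over
nonempty subsets `X` with `diam(X) ≤ R` of operators supported on `X`. -/
def IsRangeHam (G : SimpleGraph V) (R : ℕ) (H : Module.End ℂ (QState V)) : Prop :=
  ∃ h : Finset V → Module.End ℂ (QState V),
    (∀ X, SupportedOn (h X) ↑X) ∧
    (∀ X, h X ≠ 0 → X.Nonempty ∧ GDiamLE G X R) ∧
    H = ∑ X : Finset V, h X

/-- `H` is a `k`-local Hamiltonian of range `R` with respect to the graph `G`. -/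
def IsKLocalRangeHam (G : SimpleGraph V) (k R : ℕ) (H : Module.End ℂ (QState V)) : Prop :=
  ∃ h : Finset V → Module.End ℂ (QState V),
    (∀ X, SupportedOn (h X) ↑X) ∧
    (∀ X, h X ≠ 0 → X.Nonempty ∧ GDiamLE G X R ∧ X.card ≤ k) ∧
    H = ∑ X : Finset V, h X

/-- An invertible linear operator `M` is `δ`-locality-preserving with respect to `G` if
conjugation by `M` or `M⁻¹` increases the range of any operator by at most `δ`. -/
def LocalityPreserving (G : SimpleGraph V) (δ : ℕ) (M : QState V ≃ₗ[ℂ] QState V) : Prop :=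
  ∀ R : ℕ, 0 < R → ∀ O : Module.End ℂ (QState V), IsRangeHam G R O →
    IsRangeHam G (R + δ) (M.toLinearMap ∘ₗ O ∘ₗ M.symm.toLinearMap) ∧
    IsRangeHam G (R + δ) (M.symm.toLinearMap ∘ₗ O ∘ₗ M.toLinearMap)

end Defs

section Chain

/-- Distance between two sites of the open chain `{0, …, N-1}`. -/
def chainDist {N : ℕ} (i j : Fin N) : ℕ := ((i : ℤ) - (j : ℤ)).natAbs

/-- `diam(X) ≤ R` on the open chain: `diam(X) = 1 + max |i - j|`. -/
def ChainDiamLE {N : ℕ} (X : Finset (Fin N)) (R : ℕ) : Prop :=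
  ∀ i ∈ X, ∀ j ∈ X, chainDist i j + 1 ≤ R

/-- `H` is a Hamiltonian of range `R` on the open chain of `N` sites. -/
def IsChainRangeHam {N : ℕ} (R : ℕ) (H : Module.End ℂ (QState (Fin N))) : Prop :=
  ∃ h : Finset (Fin N) → Module.End ℂ (QState (Fin N)),
    (∀ X, SupportedOn (h X) ↑X) ∧
    (∀ X, h X ≠ 0 → X.Nonempty ∧ ChainDiamLE X R) ∧
    H = ∑ X : Finset (Fin N), h X

/-- `H` is a `k`-local Hamiltonian of range `R` on the open chain of `N` sites. -/
def IsChainKLocalRangeHam {N : ℕ} (k R : ℕ) (H : Module.End ℂ (QState (Fin N))) : Prop :=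
  ∃ h : Finset (Fin N) → Module.End ℂ (QState (Fin N)),
    (∀ X, SupportedOn (h X) ↑X) ∧
    (∀ X, h X ≠ 0 → X.Nonempty ∧ ChainDiamLE X R ∧ X.card ≤ k) ∧
    H = ∑ X : Finset (Fin N), h X

end Chain

end

/-!
The map permutes basis states by a circuit of local gates. The gate at `i` acts on the ball
`B_i(2d)`, which contains `I_i`, and there exchanges the configuration with only `i` excited and
the one with exactly `I_i` excited. No gate moves the vacuum, and since the `I_j` are distinct sets
of size `c > 1`, no other gate moves either of these two configurations; so the circuit maps
`S† |0̄⟩` to `Q† |0̄⟩` whatever the order of the gates.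

The order is chosen for locality. Vertices at distance at most `4d` get different colours (each
vertex has at most `Δ^{4d}` such neighbours, so greedy colouring needs `Δ^{4d} + 1` colours), so
the balls of one colour class are disjoint and its gates form a layer. Conjugating an operator by a
layer enlarges its support only by the balls meeting it, of diameter `4d`. The circuit and its
inverse both have `Δ^{4d} + 1` layers, so conjugating by either grows the range by at most
`2 · 4d · (Δ^{4d} + 1)`.
-/

open Finset

noncomputable section

section Distance

variable {V : Type*} {G : SimpleGraph V} {r s : ℕ} {i j k : V}

lemma WithinDist.refl (G : SimpleGraph V) (r : ℕ) (i : V) : WithinDist G r i i :=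
  ⟨.nil, Nat.zero_le r⟩

lemma WithinDist.symm (h : WithinDist G r i j) : WithinDist G r j i :=
  let ⟨w, hw⟩ := h
  ⟨w.reverse, by rwa [SimpleGraph.Walk.length_reverse]⟩

lemma WithinDist.trans (h₁ : WithinDist G r i j) (h₂ : WithinDist G s j k) :
    WithinDist G (r + s) i k :=
  let ⟨w₁, hw₁⟩ := h₁
  let ⟨w₂, hw₂⟩ := h₂
  ⟨w₁.append w₂, by rw [SimpleGraph.Walk.length_append]; omega⟩

lemma WithinDist.mono (h : WithinDist G r i j) (hrs : r ≤ s) : WithinDist G s i j :=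
  let ⟨w, hw⟩ := h
  ⟨w, hw.trans hrs⟩

lemma SimpleGraph.Adj.withinDist (h : G.Adj i j) : WithinDist G 1 i j :=
  ⟨h.toWalk, le_rfl⟩

lemma withinDist_zero_iff : WithinDist G 0 i j ↔ i = j :=
  ⟨fun ⟨_, hw⟩ => SimpleGraph.Walk.eq_of_length_eq_zero (Nat.le_zero.mp hw),
    fun h => h ▸ WithinDist.refl G 0 i⟩

lemma WithinDist.exists_adj_of_not_withinDist (h : WithinDist G (r + 1) i j)
    (hr : ¬ WithinDist G r i j) : ∃ u, WithinDist G r i u ∧ G.Adj u j := by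
  obtain ⟨w, hw⟩ := h
  have hlen : w.reverse.length = r + 1 := by
    rw [SimpleGraph.Walk.length_reverse]
    by_contra hne
    exact hr ⟨w, by omega⟩
  cases hrev : w.reverse with
  | nil => simp [hrev] at hlen
  | cons hadj q =>
    rw [hrev, SimpleGraph.Walk.length_cons] at hlen
    exact ⟨_, ⟨q.reverse, by rw [SimpleGraph.Walk.length_reverse]; omega⟩, hadj.symm⟩

end Distance

section Ball

variable {V : Type*} [Fintype V] (G : SimpleGraph V)

/-- `gball G v r` as a `Finset`. -/
def ballFinset (v : V) (r : ℕ) : Finset V :=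
  haveI := Classical.decPred (WithinDist G r v)
  univ.filter (WithinDist G r v)

variable {G}

@[simp] lemma mem_ballFinset {v w : V} {r : ℕ} : w ∈ ballFinset G v r ↔ WithinDist G r v w := by
  classical
  simp [ballFinset]

lemma ballFinset_zero (v : V) : ballFinset G v 0 = {v} := by
  ext w
  simp [withinDist_zero_iff, eq_comm]

lemma singleton_subset_ballFinset (i : V) (r : ℕ) : {i} ⊆ ballFinset G i r := by
  simpa using WithinDist.refl G r i

variable {Δ : ℕ}

lemma card_le_of_forall_adj (hdeg : ∀ v : V, (G.neighborSet v).ncard ≤ Δ) {s : Finset V}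
    {u : V} (hs : ∀ w ∈ s, G.Adj u w) : s.card ≤ Δ :=
  calc s.card = (s : Set V).ncard := (Set.ncard_coe_finset s).symm
    _ ≤ (G.neighborSet u).ncard := Set.ncard_le_ncard hs
    _ ≤ Δ := hdeg u

variable [DecidableEq V]

variable (G) in
/-- The vertices at distance exactly `k + 1` from `v`. -/
def sphereFinset (v : V) (k : ℕ) : Finset V :=
  ballFinset G v (k + 1) \ ballFinset G v k

lemma mem_sphereFinset {v w : V} {k : ℕ} :
    w ∈ sphereFinset G v k ↔ WithinDist G (k + 1) v w ∧ ¬ WithinDist G k v w := by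
  simp [sphereFinset]

lemma card_sphereFinset_zero_le (hdeg : ∀ v : V, (G.neighborSet v).ncard ≤ Δ) (v : V) :
    (sphereFinset G v 0).card ≤ Δ := by
  refine card_le_of_forall_adj hdeg (u := v) fun w hw => ?_
  obtain ⟨hw₁, hw₀⟩ := mem_sphereFinset.mp hw
  obtain ⟨u, hu, hadj⟩ := hw₁.exists_adj_of_not_withinDist hw₀
  rwa [withinDist_zero_iff.mp hu]

/-- Each vertex at distance `k + 2` has a neighbour at distance `k + 1`, and each vertex at
distance `k + 1` has a neighbour at distance `k`, which leaves it at most `Δ - 1` neighbours at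
distance `k + 2`. -/
lemma card_sphereFinset_succ_le (hdeg : ∀ v : V, (G.neighborSet v).ncard ≤ Δ) (v : V) (k : ℕ) :
    (sphereFinset G v (k + 1)).card ≤ (Δ - 1) * (sphereFinset G v k).card := by
  classical
  have hcover : sphereFinset G v (k + 1) ⊆
      (sphereFinset G v k).biUnion fun u => (sphereFinset G v (k + 1)).filter (G.Adj u) := by
    intro w hw
    obtain ⟨hw₁, hw₀⟩ := mem_sphereFinset.mp hw
    obtain ⟨u, hu, hadj⟩ := hw₁.exists_adj_of_not_withinDist hw₀
    have hu' : ¬ WithinDist G k v u := fun h => hw₀ (h.trans hadj.withinDist)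
    exact mem_biUnion.mpr ⟨u, mem_sphereFinset.mpr ⟨hu, hu'⟩, mem_filter.mpr ⟨hw, hadj⟩⟩
  have hfiber : ∀ u ∈ sphereFinset G v k,
      ((sphereFinset G v (k + 1)).filter (G.Adj u)).card ≤ Δ - 1 := by
    intro u hu
    obtain ⟨hu₁, hu₀⟩ := mem_sphereFinset.mp hu
    obtain ⟨u', hu', hadj⟩ := hu₁.exists_adj_of_not_withinDist hu₀
    have hnot : u' ∉ (sphereFinset G v (k + 1)).filter (G.Adj u) := fun h =>
      (mem_sphereFinset.mp (mem_filter.mp h).1).2 (hu'.mono (by omega))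
    have hcard : (insert u' ((sphereFinset G v (k + 1)).filter (G.Adj u))).card ≤ Δ := by
      refine card_le_of_forall_adj hdeg (u := u) ?_
      simp only [mem_insert, mem_filter]
      rintro w (rfl | ⟨-, h⟩)
      exacts [hadj.symm, h]
    rw [card_insert_of_notMem hnot] at hcard
    omega
  calc (sphereFinset G v (k + 1)).card
      ≤ ∑ u ∈ sphereFinset G v k, ((sphereFinset G v (k + 1)).filter (G.Adj u)).card :=
        (card_le_card hcover).trans card_biUnion_le
    _ ≤ ∑ _u ∈ sphereFinset G v k, (Δ - 1) := sum_le_sum hfiber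
    _ = (Δ - 1) * (sphereFinset G v k).card := by rw [sum_const, smul_eq_mul, mul_comm]

lemma ballFinset_succ_erase (v : V) (r : ℕ) :
    (ballFinset G v (r + 1)).erase v = (ballFinset G v r).erase v ∪ sphereFinset G v r := by
  ext w
  by_cases h : WithinDist G r v w
  · simp [mem_sphereFinset, h, h.mono (Nat.le_succ r)]
  · have : w ≠ v := fun hwv => h (hwv ▸ WithinDist.refl G r v)
    simp [mem_sphereFinset, h, this]

lemma card_ballFinset_erase_le (hdeg : ∀ v : V, (G.neighborSet v).ncard ≤ Δ) (v : V) (r : ℕ) :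
    ((ballFinset G v r).erase v).card ≤ Δ ^ r := by
  have hstep : ∀ r, ((ballFinset G v (r + 1)).erase v).card ≤
      ((ballFinset G v r).erase v).card + (sphereFinset G v r).card := fun r => by
    rw [ballFinset_succ_erase]; exact card_union_le _ _
  induction r using Nat.twoStepInduction with
  | zero => simp [ballFinset_zero]
  | one =>
    simpa [ballFinset_zero] using (hstep 0).trans
      (by simpa [ballFinset_zero] using card_sphereFinset_zero_le hdeg v)
  | more r _ ih =>
    have hsphere : (sphereFinset G v r).card ≤ ((ballFinset G v (r + 1)).erase v).card := by
      rw [ballFinset_succ_erase]; exact card_le_card subset_union_right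
    calc ((ballFinset G v (r + 2)).erase v).card
        ≤ Δ ^ (r + 1) + (Δ - 1) * Δ ^ (r + 1) :=
          (hstep _).trans (add_le_add ih ((card_sphereFinset_succ_le hdeg v r).trans
            (Nat.mul_le_mul_left _ (hsphere.trans ih))))
      _ = Δ ^ (r + 2) := by rcases Δ with _ | Δ <;> simp [pow_succ]; ring

end Ball

lemma SimpleGraph.colorable_of_forall_ncard_neighborSet_le {V : Type*} [Fintype V]
    (H : SimpleGraph V) {D : ℕ} (hdeg : ∀ v, (H.neighborSet v).ncard ≤ D) :
    H.Colorable (D + 1) := by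
  classical
  suffices ∀ s : Finset V, ∃ col : V → Fin (D + 1),
      ∀ a ∈ s, ∀ b ∈ s, H.Adj a b → col a ≠ col b by
    obtain ⟨col, hcol⟩ := this univ
    exact ⟨.mk col fun hab => hcol _ (mem_univ _) _ (mem_univ _) hab⟩
  intro s
  induction s using Finset.induction_on with
  | empty => exact ⟨0, by simp⟩
  | @insert a s ha ih =>
    obtain ⟨col, hcol⟩ := ih
    have hused : ((s.filter (H.Adj a)).image col).card < (univ : Finset (Fin (D + 1))).card := by
      calc ((s.filter (H.Adj a)).image col).card ≤ (s.filter (H.Adj a)).card := card_image_le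
        _ = (↑(s.filter (H.Adj a)) : Set V).ncard := (Set.ncard_coe_finset _).symm
        _ ≤ (H.neighborSet a).ncard := Set.ncard_le_ncard fun w hw => (mem_filter.mp hw).2
        _ < (univ : Finset (Fin (D + 1))).card := by simpa using Nat.lt_succ_of_le (hdeg a)
    obtain ⟨new, -, hnew⟩ := exists_mem_notMem_of_card_lt_card hused
    have hfree : ∀ b ∈ s, H.Adj a b → new ≠ col b := fun b hb hab h =>
      hnew (mem_image.mpr ⟨b, mem_filter.mpr ⟨hb, hab⟩, h.symm⟩)
    have hne : ∀ b ∈ s, b ≠ a := fun b hb h => ha (h ▸ hb)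
    refine ⟨Function.update col a new, ?_⟩
    simp only [mem_insert]
    rintro x (rfl | hx) y (rfl | hy) hxy
    · exact absurd hxy H.irrefl
    · simpa [hne y hy] using hfree y hy hxy
    · simpa [hne x hx] using (hfree x hx hxy.symm).symm
    · simpa [hne x hx, hne y hy] using hcol x hx y hy hxy

section Locality

variable {V : Type*}

/-- `ψ ↦ ψ ∘ π`, which sends `basisVec f` to `basisVec (π⁻¹ f)`. -/
def permEquiv (π : Equiv.Perm (V → Bool)) : QState V ≃ₗ[ℂ] QState V :=
  LinearEquiv.funCongrLeft ℂ ℂ π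

lemma permEquiv_symm (π : Equiv.Perm (V → Bool)) : (permEquiv π).symm = permEquiv π⁻¹ := rfl

lemma permEquiv_mul (π ρ : Equiv.Perm (V → Bool)) :
    permEquiv (π * ρ) = (permEquiv π).trans (permEquiv ρ) := rfl

structure IsLocalOn (τ : (V → Bool) → (V → Bool)) (B : Finset V) : Prop where
  apply_of_notMem : ∀ f, ∀ u ∉ B, τ f u = f u
  apply_congr : ∀ f f', (∀ u ∈ B, f u = f' u) → ∀ u ∈ B, τ f u = τ f' u

namespace IsLocalOn

variable [DecidableEq V] {π : Equiv.Perm (V → Bool)} {B : Finset V}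

lemma inv (hπ : IsLocalOn π B) : IsLocalOn ⇑π⁻¹ B := by
  refine ⟨fun f u hu => ?_, fun f f' hff' u hu => ?_⟩
  · simpa using (hπ.apply_of_notMem (π⁻¹ f) u hu).symm
  · let k : V → Bool := B.piecewise (π⁻¹ f) (π⁻¹ f')
    have hk : π k = f' := by
      funext w
      by_cases hw : w ∈ B
      · rw [hπ.apply_congr k (π⁻¹ f) (fun v hv => by simp [k, hv]) w hw, ← hff' w hw]
        simp
      · rw [hπ.apply_of_notMem k w hw]
        simpa [k, hw] using (hπ.apply_of_notMem (π⁻¹ f') w hw).symm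
    have : k = π⁻¹ f' := by rw [← hk]; simp
    simpa [k, hu] using congrFun this u

lemma apply_eq_iff (hπ : IsLocalOn π B) {f g : V → Bool} :
    (∀ u ∈ B, π f u = π g u) ↔ ∀ u ∈ B, f u = g u :=
  ⟨fun h => by simpa using hπ.inv.apply_congr (π f) (π g) h, hπ.apply_congr f g⟩

end IsLocalOn

variable [Fintype V]

lemma basisVec_eq_basisFun (f : V → Bool) : basisVec f = Pi.basisFun ℂ (V → Bool) f := by
  ext g
  simp [basisVec, Pi.single_apply]

lemma LinearMap.ext_basisVec [DecidableEq V] {A B : Module.End ℂ (QState V)}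
    (h : ∀ f, A (basisVec f) = B (basisVec f)) : A = B :=
  (Pi.basisFun ℂ (V → Bool)).ext fun f => by simpa [basisVec_eq_basisFun] using h f

lemma SupportedOn.finset_sum {ι : Type*} {s : Finset ι} {F : ι → Module.End ℂ (QState V)}
    {X : Set V} (hF : ∀ t ∈ s, SupportedOn (F t) X) : SupportedOn (∑ t ∈ s, F t) X := by
  refine ⟨fun f g hfg => ?_, fun f f' g g' h₁ h₂ h₃ h₄ => ?_⟩
  · simpa [LinearMap.sum_apply] using sum_eq_zero fun t ht => (hF t ht).1 f g hfg
  · simpa [LinearMap.sum_apply] using sum_congr rfl fun t ht => (hF t ht).2 f f' g g' h₁ h₂ h₃ h₄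

lemma permEquiv_symm_basisVec (π : Equiv.Perm (V → Bool)) (f : V → Bool) :
    (permEquiv π).symm (basisVec f) = basisVec (π f) := by
  ext g
  simp [permEquiv, basisVec, LinearMap.funLeft, Equiv.symm_apply_eq]

lemma conj_permEquiv_apply (π : Equiv.Perm (V → Bool)) (O : Module.End ℂ (QState V))
    (f g : V → Bool) : (permEquiv π).conj O (basisVec f) g = O (basisVec (π f)) (π g) := by
  rw [LinearEquiv.conj_apply_apply, permEquiv_symm_basisVec]
  rfl

variable [DecidableEq V]

lemma SupportedOn.conj_of_isLocalOn {O : Module.End ℂ (QState V)} {X B : Finset V}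
    {π : Equiv.Perm (V → Bool)} (hO : SupportedOn O ↑X) (hπ : IsLocalOn π B) :
    SupportedOn ((permEquiv π).conj O) ↑(X ∪ B) := by
  simp only [SupportedOn, conj_permEquiv_apply, coe_union, Set.mem_union, mem_coe, not_or]
    at hO ⊢
  refine ⟨fun f g ⟨u, ⟨huX, huB⟩, hfg⟩ => hO.1 _ _ ⟨u, huX, ?_⟩, ?_⟩
  · rwa [hπ.apply_of_notMem f u huB, hπ.apply_of_notMem g u huB]
  intro f f' g g' h₁ h₂ h₃ h₄
  have hfB : ∀ u ∈ B, π f u = π f' u := hπ.apply_congr f f' fun u hu => h₁ u (.inr hu)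
  have hgB : ∀ u ∈ B, π g u = π g' u := hπ.apply_congr g g' fun u hu => h₂ u (.inr hu)
  have transfer : ∀ {f f' : V → Bool}, (∀ u, u ∈ X ∨ u ∈ B → f u = f' u) →
      (∀ u ∈ B, π f u = π f' u) → ∀ u ∈ X, π f u = π f' u := fun {f f'} h h' u hu => by
    by_cases huB : u ∈ B
    · exact h' u huB
    · rw [hπ.apply_of_notMem f u huB, hπ.apply_of_notMem f' u huB, h u (.inl hu)]
  by_cases hcase : ∀ u ∉ X, π f u = π g u
  · refine hO.2 _ _ _ _ (transfer h₁ hfB) (transfer h₂ hgB) hcase fun u hu => ?_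
    by_cases huB : u ∈ B
    · rw [← hfB u huB, ← hgB u huB, hcase u hu]
    · rw [hπ.apply_of_notMem f' u huB, hπ.apply_of_notMem g' u huB, h₄ u ⟨hu, huB⟩]
  · push Not at hcase
    obtain ⟨u, hu, hne⟩ := hcase
    have huB : u ∈ B := by
      by_contra huB
      rw [hπ.apply_of_notMem f u huB, hπ.apply_of_notMem g u huB, h₃ u ⟨hu, huB⟩] at hne
      exact hne rfl
    rw [hO.1 _ _ ⟨u, hu, hne⟩, hO.1 _ _ ⟨u, hu, by rwa [← hfB u huB, ← hgB u huB]⟩]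

lemma SupportedOn.conj_eq_of_disjoint {O : Module.End ℂ (QState V)} {X B : Finset V}
    {π : Equiv.Perm (V → Bool)} (hO : SupportedOn O ↑X) (hπ : IsLocalOn π B)
    (hXB : Disjoint X B) : (permEquiv π).conj O = O := by
  refine LinearMap.ext_basisVec fun f => funext fun g => ?_
  rw [conj_permEquiv_apply]
  have hoff : ∀ u ∈ X, u ∉ B := fun u hu => disjoint_left.mp hXB hu
  by_cases hcase : ∀ u ∉ (X : Set V), f u = g u
  · refine hO.2 _ _ _ _ (fun u hu => hπ.apply_of_notMem f u (hoff u hu))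
      (fun u hu => hπ.apply_of_notMem g u (hoff u hu)) (fun u hu => ?_) hcase
    by_cases huB : u ∈ B
    · exact hπ.apply_congr f g (fun v hv => hcase v (disjoint_right.mp hXB hv)) u huB
    · rw [hπ.apply_of_notMem f u huB, hπ.apply_of_notMem g u huB, hcase u hu]
  · push Not at hcase
    obtain ⟨u, hu, hne⟩ := hcase
    rw [hO.1 f g ⟨u, hu, hne⟩]
    by_cases huB : u ∈ B
    · obtain ⟨w, hwB, hw⟩ : ∃ w ∈ B, π f w ≠ π g w := by
        by_contra! h
        exact hne (hπ.apply_eq_iff.mp h u huB)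
      exact hO.1 _ _ ⟨w, fun hwX => hoff w hwX hwB, hw⟩
    · exact hO.1 _ _ ⟨u, hu, by rwa [hπ.apply_of_notMem f u huB, hπ.apply_of_notMem g u huB]⟩

end Locality

section Circuits

open Function

variable {V : Type*} {ι : Type*}

section Circuit

variable {π : ι → Equiv.Perm (V → Bool)}

def circuit (π : ι → Equiv.Perm (V → Bool)) (layers : List (List ι)) : Equiv.Perm (V → Bool) :=
  (layers.map fun L => (L.map π).prod).prod

lemma circuit_eq_prod_flatten (layers : List (List ι)) :
    circuit π layers = (layers.flatten.map π).prod := by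
  simp [circuit, List.map_flatten, List.prod_flatten, Function.comp_def]

lemma circuit_inv (layers : List (List ι)) :
    (circuit π layers)⁻¹ = circuit (fun i => (π i)⁻¹) (layers.map List.reverse).reverse := by
  simp [circuit, List.prod_inv_reverse, List.map_reverse, Function.comp_def]

end Circuit

variable [Fintype V]

def SpreadsBy (G : SimpleGraph V) (r : ℕ) (σ : Equiv.Perm (V → Bool)) : Prop :=
  ∀ (O : Module.End ℂ (QState V)) (X : Finset V), SupportedOn O ↑X →
    ∃ Y : Finset V, X ⊆ Y ∧ SupportedOn ((permEquiv σ).conj O) ↑Y ∧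
      ∀ y ∈ Y, ∃ x ∈ X, WithinDist G r x y

variable {G : SimpleGraph V}

lemma spreadsBy_one (r : ℕ) : SpreadsBy G r 1 :=
  fun _ X hO => ⟨X, subset_rfl, hO, fun y hy => ⟨y, hy, .refl G r y⟩⟩

lemma SpreadsBy.mul {r s : ℕ} {σ τ : Equiv.Perm (V → Bool)} (hσ : SpreadsBy G r σ)
    (hτ : SpreadsBy G s τ) : SpreadsBy G (r + s) (σ * τ) := by
  intro O X hO
  obtain ⟨Y, hXY, hY, hYX⟩ := hσ O X hO
  obtain ⟨Z, hYZ, hZ, hZY⟩ := hτ _ Y hY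
  refine ⟨Z, hXY.trans hYZ, ?_, fun z hz => ?_⟩
  · rwa [permEquiv_mul, ← LinearEquiv.conj_trans]
  · obtain ⟨y, hy, hyz⟩ := hZY z hz
    obtain ⟨x, hx, hxy⟩ := hYX y hy
    exact ⟨x, hx, hxy.trans hyz⟩

lemma spreadsBy_list_prod {r : ℕ} {l : List (Equiv.Perm (V → Bool))}
    (hl : ∀ σ ∈ l, SpreadsBy G r σ) : SpreadsBy G (l.length * r) l.prod := by
  induction l with
  | nil => exact spreadsBy_one _
  | cons σ l ih =>
    rw [List.prod_cons, List.length_cons, add_mul, one_mul, add_comm]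
    exact (hl σ (.head _)).mul (ih fun τ hτ => hl τ (.tail _ hτ))

variable [DecidableEq V] {π : ι → Equiv.Perm (V → Bool)} {B : ι → Finset V}

/-- Within one layer of gates with disjoint supports, a gate can only touch the support grown
so far if it meets the original support. -/
lemma exists_supportedOn_conj_layer (hπ : ∀ i, IsLocalOn (π i) (B i)) {L : List ι}
    (hL : L.Pairwise (Disjoint on B)) {O : Module.End ℂ (QState V)} {X : Finset V}
    (hO : SupportedOn O ↑X) :
    ∃ Y : Finset V, X ⊆ Y ∧ SupportedOn ((permEquiv (L.map π).prod).conj O) ↑Y ∧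
      ∀ y ∈ Y, y ∈ X ∨ ∃ i ∈ L, y ∈ B i ∧ ¬ Disjoint (B i) X := by
  induction L generalizing O X with
  | nil => exact ⟨X, subset_rfl, hO, fun y hy => .inl hy⟩
  | cons i L ih =>
    obtain ⟨hiL, hL⟩ := List.pairwise_cons.mp hL
    rw [List.map_cons, List.prod_cons, permEquiv_mul, ← LinearEquiv.conj_trans]
    by_cases hdisj : Disjoint X (B i)
    · rw [LinearEquiv.trans_apply, hO.conj_eq_of_disjoint (hπ i) hdisj]
      exact (ih hL hO).imp fun Y ⟨hXY, hY, hYX⟩ => ⟨hXY, hY, fun y hy =>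
        (hYX y hy).imp_right fun ⟨j, hj, hyj, hjX⟩ => ⟨j, .tail _ hj, hyj, hjX⟩⟩
    obtain ⟨Y, hXY, hY, hYX⟩ := ih hL (hO.conj_of_isLocalOn (hπ i))
    refine ⟨Y, subset_union_left.trans hXY, hY, fun y hy => ?_⟩
    rcases hYX y hy with hy | ⟨j, hj, hyj, hjX⟩
    · rcases mem_union.mp hy with hy | hy
      · exact .inl hy
      · exact .inr ⟨i, .head _, hy, fun h => hdisj h.symm⟩
    · refine .inr ⟨j, .tail _ hj, hyj, fun h => hjX ?_⟩
      exact disjoint_union_right.mpr ⟨h, (hiL j hj).symm⟩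

lemma spreadsBy_layer {r : ℕ} (hπ : ∀ i, IsLocalOn (π i) (B i))
    (hB : ∀ i, ∀ y ∈ B i, ∀ z ∈ B i, WithinDist G r y z) {L : List ι}
    (hL : L.Pairwise (Disjoint on B)) : SpreadsBy G r (L.map π).prod := by
  intro O X hO
  obtain ⟨Y, hXY, hY, hYX⟩ := exists_supportedOn_conj_layer hπ hL hO
  refine ⟨Y, hXY, hY, fun y hy => ?_⟩
  rcases hYX y hy with hy | ⟨i, -, hyi, hiX⟩
  · exact ⟨y, hy, .refl G r y⟩
  · obtain ⟨x, hxi, hxX⟩ := not_disjoint_iff.mp hiX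
    exact ⟨x, hxX, hB i x hxi y hyi⟩

lemma spreadsBy_circuit {r : ℕ} (hπ : ∀ i, IsLocalOn (π i) (B i))
    (hB : ∀ i, ∀ y ∈ B i, ∀ z ∈ B i, WithinDist G r y z) {layers : List (List ι)}
    (hlayers : ∀ L ∈ layers, L.Pairwise (Disjoint on B)) :
    SpreadsBy G (layers.length * r) (circuit π layers) := by
  simpa [circuit] using spreadsBy_list_prod (l := layers.map fun L => (L.map π).prod)
    (by simpa using fun L hL => spreadsBy_layer hπ hB (hlayers L hL))

lemma spreadsBy_circuit_inv {r : ℕ} (hπ : ∀ i, IsLocalOn (π i) (B i))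
    (hB : ∀ i, ∀ y ∈ B i, ∀ z ∈ B i, WithinDist G r y z) {layers : List (List ι)}
    (hlayers : ∀ L ∈ layers, L.Pairwise (Disjoint on B)) :
    SpreadsBy G (layers.length * r) (circuit π layers)⁻¹ := by
  have hrev : ∀ L ∈ (layers.map List.reverse).reverse, L.Pairwise (Disjoint on B) := by
    intro _ hrevL
    obtain ⟨L, hL, rfl⟩ := List.mem_map.mp (List.mem_reverse.mp hrevL)
    exact List.pairwise_reverse.mpr ((hlayers L hL).imp fun h => h.symm)
  rw [circuit_inv]
  simpa using spreadsBy_circuit (fun i => (hπ i).inv) hB hrev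

end Circuits

section RangeHam

variable {V : Type*} [Fintype V] [DecidableEq V] {G : SimpleGraph V}

lemma SpreadsBy.conj_isRangeHam {r R : ℕ} {σ : Equiv.Perm (V → Bool)}
    {O : Module.End ℂ (QState V)} (hσ : SpreadsBy G r σ) (hR : 0 < R) (hO : IsRangeHam G R O) :
    IsRangeHam G (R + 2 * r) ((permEquiv σ).conj O) := by
  classical
  obtain ⟨h, hsupp, hnz, rfl⟩ := hO
  choose Y hXY hY hYX using fun X => hσ (h X) X (hsupp X)
  refine ⟨fun Z => ∑ X with Y X = Z, (permEquiv σ).conj (h X), fun Z => ?_, fun Z hZ => ?_, ?_⟩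
  · exact SupportedOn.finset_sum fun X hX => (mem_filter.mp hX).2 ▸ hY X
  · obtain ⟨X, hX, hXZ⟩ := exists_ne_zero_of_sum_ne_zero hZ
    obtain rfl := (mem_filter.mp hX).2
    obtain ⟨hXne, hXdiam⟩ := hnz X fun h0 => hXZ (by rw [h0, map_zero])
    refine ⟨hXne.mono (hXY X), fun y hy y' hy' => ?_⟩
    obtain ⟨x, hx, hxy⟩ := hYX X y hy
    obtain ⟨x', hx', hxy'⟩ := hYX X y' hy'
    exact (hxy.symm.trans (hXdiam x hx x' hx')).trans hxy' |>.mono (by omega)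
  · rw [sum_fiberwise, map_sum]

end RangeHam

section Gates

variable {V : Type*} [DecidableEq V]

def swapOn (B : Finset V) (p q : V → Bool) (f : V → Bool) : V → Bool :=
  if ∀ u ∈ B, f u = p u then B.piecewise q f
  else if ∀ u ∈ B, f u = q u then B.piecewise p f
  else f

variable {B : Finset V} {p q f : V → Bool}

lemma swapOn_of_left (hp : ∀ u ∈ B, f u = p u) : swapOn B p q f = B.piecewise q f :=
  if_pos hp

lemma swapOn_of_right (hpq : ¬ ∀ u ∈ B, p u = q u) (hq : ∀ u ∈ B, f u = q u) :
    swapOn B p q f = B.piecewise p f := by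
  rw [swapOn, if_neg fun hp => hpq fun u hu => (hp u hu).symm.trans (hq u hu), if_pos hq]

lemma swapOn_of_not (hp : ¬ ∀ u ∈ B, f u = p u) (hq : ¬ ∀ u ∈ B, f u = q u) :
    swapOn B p q f = f := by
  rw [swapOn, if_neg hp, if_neg hq]

lemma swapOn_involutive (hpq : ¬ ∀ u ∈ B, p u = q u) : Function.Involutive (swapOn B p q) := by
  intro f
  by_cases hp : ∀ u ∈ B, f u = p u
  · rw [swapOn_of_left hp, swapOn_of_right hpq fun u hu => by simp [hu]]
    ext u; by_cases hu : u ∈ B <;> simp [hu, hp]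
  by_cases hq : ∀ u ∈ B, f u = q u
  · rw [swapOn_of_right hpq hq, swapOn_of_left fun u hu => by simp [hu]]
    ext u; by_cases hu : u ∈ B <;> simp [hu, hq]
  rw [swapOn_of_not hp hq, swapOn_of_not hp hq]

lemma isLocalOn_swapOn : IsLocalOn (swapOn B p q) B := by
  refine ⟨fun f u hu => ?_, fun f f' hff' u hu => ?_⟩
  · unfold swapOn; split_ifs <;> simp [hu]
  · have hiff : ∀ r : V → Bool, (∀ u ∈ B, f u = r u) ↔ ∀ u ∈ B, f' u = r u := fun r =>
      forall₂_congr fun u hu => by rw [hff' u hu]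
    unfold swapOn
    simp only [hiff]
    split_ifs <;> simp [hu, hff' u hu]

def occupied (S : Finset V) : V → Bool := fun u => decide (u ∈ S)

lemma forall_occupied_eq_iff {S T : Finset V} :
    (∀ u ∈ B, occupied S u = occupied T u) ↔ S ∩ B = T ∩ B := by
  simp only [occupied, decide_eq_decide, Finset.ext_iff, mem_inter]
  exact ⟨fun h u => by by_cases hu : u ∈ B <;> simp [hu, h u],
    fun h u hu => by simpa [hu] using h u⟩

lemma piecewise_occupied {S T : Finset V} (hS : S ⊆ B) (hT : T ⊆ B) :
    B.piecewise (occupied T) (occupied S) = occupied T := by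
  ext u
  by_cases hu : u ∈ B
  · simp [hu]
  · have hSu : u ∉ S := fun h => hu (hS h)
    have hTu : u ∉ T := fun h => hu (hT h)
    simp [hu, occupied, hSu, hTu]

end Gates

section Vacuum

variable {V : Type*} [Fintype V] [DecidableEq V]

lemma vac_eq_basisVec : vac V = basisVec (occupied ∅) := by
  rw [vac]
  congr 1

lemma creOp_basisVec {a : V} {f : V → Bool} (hf : f a = false) :
    creOp a (basisVec f) = basisVec (Function.update f a true) := by
  ext g
  by_cases hg : g a = true
  · have key : Function.update g a false = f ↔ g = Function.update f a true := by
      rw [Function.update_eq_iff, Function.eq_update_iff]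
      simp [hg, hf]
    simp [basisVec, hg, key]
  · have : g ≠ Function.update f a true := fun h => hg (h ▸ Function.update_self a true f)
    simp [basisVec, hg, this]

lemma creProd_cons {a : V} {S : Finset V} (ha : a ∉ S) :
    creProd (S.cons a ha) = creOp a * creProd S :=
  noncommProd_cons ..

lemma creProd_vac (S : Finset V) : creProd S (vac V) = basisVec (occupied S) := by
  induction S using Finset.cons_induction with
  | empty => exact LinearMap.congr_fun (noncommProd_empty ..) _
  | cons a S ha ih =>
    rw [creProd_cons, Module.End.mul_apply, ih, creOp_basisVec (by simpa [occupied] using ha)]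
    congr 1
    ext u
    by_cases hu : u = a <;> simp [occupied, hu]

lemma Sdag_vac : Sdag V (vac V) = ∑ i : V, basisVec (occupied {i}) := by
  simp only [Sdag, LinearMap.sum_apply, ← creProd_vac]
  exact sum_congr rfl fun i _ => by simp [creProd]

end Vacuum

namespace Equiv.Perm

variable {α ι : Type*} {π : ι → Equiv.Perm α} {x y : α}

lemma prod_map_apply_eq_self {l : List ι} (h : ∀ i ∈ l, π i x = x) : (l.map π).prod x = x := by
  induction l with
  | nil => rfl
  | cons i l ih =>
    rw [List.map_cons, List.prod_cons, mul_apply, ih fun j hj => h j (.tail _ hj), h i (.head _)]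

lemma prod_map_apply_eq_of_nodup {l : List ι} (hl : l.Nodup) {i : ι} (hi : i ∈ l)
    (hxy : π i x = y) (hx : ∀ j ∈ l, j ≠ i → π j x = x) (hy : ∀ j ∈ l, j ≠ i → π j y = y) :
    (l.map π).prod x = y := by
  obtain ⟨s, t, rfl⟩ := List.append_of_mem hi
  obtain ⟨-, hit, hst⟩ := List.nodup_append.mp hl
  have his : i ∉ s := fun h => hst i h i (.head _) rfl
  have hit : i ∉ t := (List.nodup_cons.mp hit).1
  rw [List.map_append, List.prod_append, List.map_cons, List.prod_cons, mul_apply, mul_apply,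
    prod_map_apply_eq_self fun j hj => hx j (by simp [hj]) (by rintro rfl; exact hit hj), hxy,
    prod_map_apply_eq_self fun j hj => hy j (by simp [hj]) (by rintro rfl; exact his hj)]

end Equiv.Perm

section Layers

variable {V : Type*} [Fintype V] {K : ℕ}

def colorLayers (col : V → Fin K) : List (List V) :=
  (List.finRange K).map fun k => (univ.filter (col · = k)).toList

lemma length_colorLayers (col : V → Fin K) : (colorLayers col).length = K := by
  simp [colorLayers]

lemma pairwise_of_mem_colorLayers {col : V → Fin K} {R : V → V → Prop}
    (hR : ∀ a b, a ≠ b → col a = col b → R a b) : ∀ L ∈ colorLayers col, L.Pairwise R := by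
  simp only [colorLayers, List.mem_map, List.mem_finRange, true_and]
  rintro _ ⟨k, rfl⟩
  refine (nodup_toList _).imp_of_mem fun ha hb hab => hR _ _ hab ?_
  simp only [mem_toList, mem_filter] at ha hb
  exact ha.2.trans hb.2.symm

lemma nodup_flatten_colorLayers (col : V → Fin K) : (colorLayers col).flatten.Nodup := by
  simp only [colorLayers, ← List.flatMap_def]
  refine List.nodup_flatMap.mpr ⟨fun k _ => nodup_toList _, ?_⟩
  refine (List.nodup_finRange K).imp fun hkl a ha hb => hkl ?_
  simp only [mem_toList, mem_filter] at ha hb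
  exact ha.2.symm.trans hb.2

lemma mem_flatten_colorLayers (col : V → Fin K) (i : V) : i ∈ (colorLayers col).flatten := by
  simp [colorLayers]

end Layers

section DickeGates

variable {V : Type*} [Fintype V] {G : SimpleGraph V} {d c : ℕ} {I : V → Finset V}

lemma subset_ballFinset (hclose : ∀ i, ∀ j ∈ I i, WithinDist G d i j) (i : V) :
    I i ⊆ ballFinset G i (2 * d) :=
  fun j hj => mem_ballFinset.mpr ((hclose i j hj).mono (by omega))

variable [DecidableEq V]

variable (G d I) in
def dickeGate (i : V) : (V → Bool) → (V → Bool) :=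
  swapOn (ballFinset G i (2 * d)) (occupied {i}) (occupied (I i))

lemma dickeGate_occupied_of_ne (hclose : ∀ i, ∀ j ∈ I i, WithinDist G d i j) {U : Finset V}
    {j : V} (h₁ : U ∩ ballFinset G j (2 * d) ≠ {j}) (h₂ : U ∩ ballFinset G j (2 * d) ≠ I j) :
    dickeGate G d I j (occupied U) = occupied U := by
  refine swapOn_of_not ?_ ?_ <;> rw [forall_occupied_eq_iff]
  · rwa [inter_eq_left.mpr (singleton_subset_ballFinset j _)]
  · rwa [inter_eq_left.mpr (subset_ballFinset hclose j)]

lemma dickeGate_involutive (hc : 1 < c) (hcard : ∀ i, (I i).card = c)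
    (hclose : ∀ i, ∀ j ∈ I i, WithinDist G d i j) (i : V) :
    Function.Involutive (dickeGate G d I i) := by
  refine swapOn_involutive ?_
  rw [forall_occupied_eq_iff, inter_eq_left.mpr (singleton_subset_ballFinset i _),
    inter_eq_left.mpr (subset_ballFinset hclose i)]
  intro h
  have := hcard i
  rw [← h, card_singleton] at this
  omega

lemma isLocalOn_dickeGate (i : V) : IsLocalOn (dickeGate G d I i) (ballFinset G i (2 * d)) :=
  isLocalOn_swapOn

lemma dickeGate_occupied_singleton_self (hclose : ∀ i, ∀ j ∈ I i, WithinDist G d i j) (i : V) :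
    dickeGate G d I i (occupied {i}) = occupied (I i) := by
  rw [dickeGate, swapOn_of_left fun _ _ => rfl,
    piecewise_occupied (singleton_subset_ballFinset i _) (subset_ballFinset hclose i)]

lemma dickeGate_occupied_empty (hc : 1 < c) (hcard : ∀ i, (I i).card = c)
    (hclose : ∀ i, ∀ j ∈ I i, WithinDist G d i j) (j : V) :
    dickeGate G d I j (occupied ∅) = occupied ∅ := by
  refine dickeGate_occupied_of_ne hclose (by simp) fun h => ?_
  have := hcard j
  rw [empty_inter] at h
  rw [← h, card_empty] at this
  omega

lemma dickeGate_occupied_singleton (hc : 1 < c) (hcard : ∀ i, (I i).card = c)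
    (hclose : ∀ i, ∀ j ∈ I i, WithinDist G d i j) {i j : V} (hji : j ≠ i) :
    dickeGate G d I j (occupied {i}) = occupied {i} := by
  refine dickeGate_occupied_of_ne hclose (fun h => hji ?_) fun h => ?_
  · exact mem_singleton.mp (mem_inter.mp (h.symm.subset (mem_singleton_self j))).1
  · have := (hcard j).symm.trans_le
      (h ▸ (card_le_card inter_subset_left).trans (card_singleton i).le)
    omega

/-- If `j ∈ I i`, the ball around `j` contains all of `I i`, too many sites to match `{j}`. -/
lemma dickeGate_occupied_target (hc : 1 < c) (hcard : ∀ i, (I i).card = c)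
    (hclose : ∀ i, ∀ j ∈ I i, WithinDist G d i j) (hinj : Function.Injective I) {i j : V}
    (hji : j ≠ i) : dickeGate G d I j (occupied (I i)) = occupied (I i) := by
  refine dickeGate_occupied_of_ne hclose (fun h => ?_) fun h => hji (hinj ?_)
  · have hj : j ∈ I i := (mem_inter.mp (h.symm.subset (mem_singleton_self j))).1
    have hsub : I i ⊆ ballFinset G j (2 * d) := fun u hu =>
      mem_ballFinset.mpr (((hclose i j hj).symm.trans (hclose i u hu)).mono (by omega))
    rw [inter_eq_left.mpr hsub] at h
    have := hcard i
    rw [h, card_singleton] at this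
    omega
  · exact eq_of_subset_of_card_le (h ▸ inter_subset_left) (by rw [hcard, hcard])

end DickeGates

lemma ncard_neighborSet_fromRel_withinDist_le {V : Type*} [Fintype V] [DecidableEq V]
    {G : SimpleGraph V} {Δ : ℕ} (hdeg : ∀ v : V, (G.neighborSet v).ncard ≤ Δ) (r : ℕ) (v : V) :
    ((SimpleGraph.fromRel (WithinDist G r)).neighborSet v).ncard ≤ Δ ^ r := by
  refine (Set.ncard_le_ncard fun w hw => ?_).trans
    ((Set.ncard_coe_finset _).trans_le (card_ballFinset_erase_le hdeg v r))
  obtain ⟨hne, h | h⟩ := (SimpleGraph.fromRel_adj _ _ _).mp hw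
  · simpa [hne.symm] using h
  · simpa [hne.symm] using h.symm

end

theorem exists_locality_preserving_map_general
    {V : Type*} [Fintype V] [DecidableEq V]
    (G : SimpleGraph V)
    (Δ : ℕ) (hdeg : ∀ v : V, (G.neighborSet v).ncard ≤ Δ)
    (c d : ℕ) (hc : 1 < c)
    (I : V → Finset V)
    (hcard : ∀ i, (I i).card = c)
    (hclose : ∀ i, ∀ j ∈ I i, WithinDist G d i j)
    (hinj : Function.Injective I) :
    ∃ M : QState V ≃ₗ[ℂ] QState V,
      LocalityPreserving G (8 * d * (Δ ^ (4 * d) + 1)) M ∧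
      M (vac V) = vac V ∧
      M ((Sdag V) (vac V)) = (∑ i : V, creProd (I i)) (vac V) := by
  obtain ⟨col⟩ := SimpleGraph.colorable_of_forall_ncard_neighborSet_le _
    (ncard_neighborSet_fromRel_withinDist_le hdeg (4 * d))
  let B i := ballFinset G i (2 * d)
  have hB : ∀ i, ∀ y ∈ B i, ∀ z ∈ B i, WithinDist G (4 * d) y z := fun i y hy z hz =>
    ((mem_ballFinset.mp hy).symm.trans (mem_ballFinset.mp hz)).mono (by omega)
  have hlayers : ∀ L ∈ colorLayers col, L.Pairwise fun a b => Disjoint (B a) (B b) :=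
    pairwise_of_mem_colorLayers fun a b hab hcol => disjoint_left.mpr fun x hxa hxb =>
      col.valid ((SimpleGraph.fromRel_adj _ _ _).mpr ⟨hab, .inl <|
        ((mem_ballFinset.mp hxa).trans (mem_ballFinset.mp hxb).symm).mono (by omega)⟩) hcol
  let π i := (dickeGate_involutive hc hcard hclose i).toPerm
  have hπ i : IsLocalOn (π i) (B i) := isLocalOn_dickeGate i
  have hδ : 8 * d * (Δ ^ (4 * d) + 1) = 2 * ((colorLayers col).length * (4 * d)) := by
    rw [length_colorLayers]; ring
  refine ⟨(permEquiv (circuit π (colorLayers col))).symm, fun R hR O hO => ?_, ?_, ?_⟩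
  · rw [hδ]
    exact ⟨(spreadsBy_circuit_inv hπ hB hlayers).conj_isRangeHam hR hO,
      (spreadsBy_circuit hπ hB hlayers).conj_isRangeHam hR hO⟩
  · rw [vac_eq_basisVec, permEquiv_symm_basisVec, circuit_eq_prod_flatten,
      Equiv.Perm.prod_map_apply_eq_self fun j _ => dickeGate_occupied_empty hc hcard hclose j]
  · rw [Sdag_vac, map_sum, LinearMap.sum_apply]
    refine sum_congr rfl fun i _ => ?_
    rw [permEquiv_symm_basisVec, creProd_vac, circuit_eq_prod_flatten,
      Equiv.Perm.prod_map_apply_eq_of_nodup (nodup_flatten_colorLayers col)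
        (mem_flatten_colorLayers col i) (dickeGate_occupied_singleton_self hclose i)
        (fun j _ hji => dickeGate_occupied_singleton hc hcard hclose hji)
        (fun j _ hji => dickeGate_occupied_target hc hcard hclose hinj hji)]

/-- Existence of a δ-locality-preserving invertible map sending the vacuum to
itself and `S† |0̄⟩` to `Q† |0̄⟩`, for `Q† = ∑ i ∏_{j ∈ I_i} s†_j` with distinct index sets
`I_i` of size `c > 1` located within distance `d` of `i`, with `δ = 8d(Δ^{4d}+1)`. -/
theorem exists_locality_preserving_map
    {V : Type*} [Fintype V] [DecidableEq V]
    (G : SimpleGraph V)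
    (Δ : ℕ) (hdeg : ∀ v : V, (G.neighborSet v).ncard ≤ Δ)
    (c d : ℕ) (hc : 1 < c) (hd : 1 ≤ d)
    (I : V → Finset V)
    (hcard : ∀ i, (I i).card = c)
    (hclose : ∀ i, ∀ j ∈ I i, WithinDist G d i j)
    (hinj : Function.Injective I) :
    ∃ M : QState V ≃ₗ[ℂ] QState V,
      LocalityPreserving G (8 * d * (Δ ^ (4 * d) + 1)) M ∧
      M (vac V) = vac V ∧
      M ((Sdag V) (vac V)) = (∑ i : V, creProd (I i)) (vac V) :=
  exists_locality_preserving_map_general G Δ hdeg c d hc I hcard hclose hinj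
end

section
/- Let V be a finite set of N qubit sites, let k ≥ 2 and T_max ≥ 1 be integers, and let H = ∑_{t∈T} h_t be a finite sum of operators, where each h_t is supported on a subset X_t ⊆ V with |X_t| ≤ k, and every site of V belongs to at most T_max of the sets X_t. Let G be the graph on V with an edge between distinct sites i and j whenever i, j ∈ X_t for some t ∈ T, and assume G is connected. If N > 2k·(((k−1)·T_max)^8 + 1) and for every 0 ≤ p ≤ N there is E_p ∈ ℂ with H |W^p⟩ = E_p |W^p⟩, then there exist Ω, ω ∈ ℂ with E_p = Ω + ω·p for all 0 ≤ p ≤ N. -/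
open scoped BigOperators
set_option linter.unusedSectionVars false

/-- The graph induced by a family of interaction supports: distinct sites `i` and `j` are
adjacent whenever some interaction term involves both. -/
def inducedGraph {V : Type*} {n : ℕ} (X : Fin n → Finset V) : SimpleGraph V where
  Adj i j := i ≠ j ∧ ∃ t, i ∈ X t ∧ j ∈ X t
  symm := by
    constructor
    intro i j hij
    exact ⟨hij.1.symm, hij.2.imp fun t ht => ⟨ht.2, ht.1⟩⟩
  loopless := by
    constructor
    intro i hi
    exact hi.1 rfl

/-!
Evaluating `H |W^p⟩ = E_p |W^p⟩` at a configuration `g` of weight `p` gives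
`E_p = ∑_t a_t(g)`, where the amplitude `a_t(g)` of `h_t` depends only on `g` restricted to
`X_t`. Occupying an empty site `i` raises the weight by one and changes only the terms with
`i ∈ X_t`, so `E_{p+1} - E_p` depends only on `g` restricted to the star `Z` of `i`, of size
at most `T_max (k - 1) + 1`. Comparing with configurations empty on `Z` (for `p + |Z| ≤ N`) and
full on `Z \ {i}` (for `|Z| - 1 ≤ p`) shows that the spacing is constant as soon as these two
ranges overlap, i.e. `2 |Z| ≤ N + 1`.
-/

namespace Dicke

open Finset
open scoped Nat

section Weight

variable {V : Type*} [Fintype V] [DecidableEq V]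

def weightOn (S : Finset V) (g : V → Bool) : ℕ := #(S.filter fun j => g j = true)

def weight (g : V → Bool) : ℕ := weightOn univ g

lemma weight_le_card (g : V → Bool) : weight g ≤ Fintype.card V :=
  card_filter_le _ _

lemma weightOn_congr {S : Finset V} {g g' : V → Bool} (h : ∀ j ∈ S, g j = g' j) :
    weightOn S g = weightOn S g' := by
  unfold weightOn
  rw [filter_congr fun j hj => by rw [h j hj]]

lemma weight_eq_weightOn_add_weightOn_compl (S : Finset V) (g : V → Bool) :
    weight g = weightOn S g + weightOn Sᶜ g := by
  rw [weight, weightOn, weightOn, weightOn, ← card_union_of_disjoint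
    (disjoint_filter_filter disjoint_compl_right), ← filter_union, union_compl]

lemma weight_eq_iff_weightOn_eq {X : Finset V} {f g : V → Bool} (h : ∀ j ∉ X, f j = g j) :
    weight f = weight g ↔ weightOn X f = weightOn X g := by
  rw [weight_eq_weightOn_add_weightOn_compl X, weight_eq_weightOn_add_weightOn_compl X g,
    weightOn_congr fun j hj => h j (mem_compl.mp hj)]
  omega

lemma weight_decide_mem (T : Finset V) : weight (fun j => decide (j ∈ T)) = #T := by
  simp [weight, weightOn]

lemma weight_update_false {g : V → Bool} {i : V} (hi : g i = true) :
    weight (Function.update g i false) + 1 = weight g := by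
  have hset : (univ.filter fun j => Function.update g i false j = true)
      = (univ.filter fun j => g j = true).erase i := by
    ext j
    by_cases hj : j = i <;> simp [hj, Function.update_of_ne]
  rw [weight, weightOn, hset, card_erase_add_one (by simpa using hi)]
  rfl

lemma weight_update_true {g : V → Bool} {i : V} (hi : g i = false) :
    weight (Function.update g i true) = weight g + 1 := by
  have := weight_update_false (g := Function.update g i true) (i := i) (by simp)
  rwa [Function.update_idem, Function.update_eq_self_iff.mpr hi.symm, eq_comm] at this

lemma weight_eq_zero_iff {g : V → Bool} : weight g = 0 ↔ g = fun _ => false := by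
  simp [weight, weightOn, funext_iff]

lemma exists_weight_eq_and_eqOn (Z : Finset V) (c : V → Bool) {p : ℕ}
    (hlow : weightOn Z c ≤ p) (hhigh : p ≤ weightOn Z c + #Zᶜ) :
    ∃ g : V → Bool, weight g = p ∧ ∀ j ∈ Z, g j = c j := by
  obtain ⟨A, hAZ, hA⟩ := exists_subset_card_eq (s := Zᶜ) (n := p - weightOn Z c) (by omega)
  have hdisj : Disjoint (Z.filter fun j => c j = true) A :=
    disjoint_left.mpr fun j hj hjA => mem_compl.mp (hAZ hjA) (mem_filter.mp hj).1
  refine ⟨fun j => decide (j ∈ (Z.filter fun j => c j = true) ∪ A), ?_, fun j hj => ?_⟩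
  · rw [weight_decide_mem, card_union_of_disjoint hdisj, hA, ← weightOn]
    omega
  · have : j ∉ A := fun hjA => mem_compl.mp (hAZ hjA) hj
    cases hc : c j <;> simp [hj, hc, this]

end Weight

section States

variable {V : Type*} [Fintype V] [DecidableEq V]

lemma Sdag_apply (ψ : QState V) (g : V → Bool) :
    Sdag V ψ g = ∑ j, if g j = true then ψ (Function.update g j false) else 0 := by
  simp [Sdag, LinearMap.sum_apply, Finset.sum_apply]

lemma WState_apply (p : ℕ) (g : V → Bool) :
    WState V p g = if weight g = p then (p ! : ℂ) else 0 := by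
  induction p generalizing g with
  | zero =>
    simp [WState, vac, basisVec, weight_eq_zero_iff]
  | succ p ih =>
    have hstep : WState V (p + 1) = Sdag V (WState V p) := by
      rw [WState, WState, pow_succ', Module.End.mul_apply]
    have hterm : ∀ j, (if g j = true then WState V p (Function.update g j false) else 0)
        = if g j = true then (if weight g = p + 1 then (p ! : ℂ) else 0) else 0 := by
      intro j
      by_cases hj : g j = true
      · have := weight_update_false hj
        simp only [hj, if_true, ih,
          show weight (Function.update g j false) = p ↔ weight g = p + 1 by omega]
      · rw [if_neg hj, if_neg hj]
    rw [hstep, Sdag_apply, sum_congr rfl fun j _ => hterm j, ← sum_filter, sum_const]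
    split_ifs with hw
    · rw [← weightOn, ← weight, hw, Nat.factorial_succ]
      push_cast
      ring
    · simp

lemma apply_eq_sum_basisVec (O : Module.End ℂ (QState V)) (ψ : QState V) (g : V → Bool) :
    O ψ g = ∑ f, ψ f * O (basisVec f) g := by
  have hψ : ψ = ∑ f, ψ f • basisVec f := by
    refine (pi_eq_sum_univ ψ).trans (sum_congr rfl fun f _ => ?_)
    simp only [eq_comm (a := f)]
    rfl
  conv_lhs => rw [hψ]
  simp [Finset.sum_apply]

def localMoves (X : Finset V) (g : V → Bool) : Finset (V → Bool) :=
  univ.filter fun f => (∀ j ∉ X, f j = g j) ∧ weightOn X f = weightOn X g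

@[simp] lemma mem_localMoves {X : Finset V} {f g : V → Bool} :
    f ∈ localMoves X g ↔ (∀ j ∉ X, f j = g j) ∧ weightOn X f = weightOn X g := by
  simp [localMoves]

def dickeAmp (O : Module.End ℂ (QState V)) (X : Finset V) (g : V → Bool) : ℂ :=
  ∑ f ∈ localMoves X g, O (basisVec f) g

lemma apply_WState_weight {O : Module.End ℂ (QState V)} {X : Finset V}
    (hO : SupportedOn O ↑X) (g : V → Bool) :
    O (WState V (weight g)) g = ((weight g) ! : ℂ) * dickeAmp O X g := by
  rw [apply_eq_sum_basisVec, dickeAmp, mul_sum]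
  simp only [WState_apply, ite_mul, zero_mul, ← sum_filter]
  refine (sum_subset (fun f hf => ?_) fun f hf hnf => ?_).symm
  · rw [mem_localMoves] at hf
    simpa using (weight_eq_iff_weightOn_eq hf.1).mpr hf.2
  · simp only [mem_filter, mem_univ, true_and, mem_localMoves, not_and] at hf hnf
    by_cases hoff : ∀ j ∉ X, f j = g j
    · exact absurd ((weight_eq_iff_weightOn_eq hoff).mp hf) (hnf hoff)
    · rw [hO.1 f g (by simpa using hoff), mul_zero]

lemma dickeAmp_congr {O : Module.End ℂ (QState V)} {X : Finset V} (hO : SupportedOn O ↑X)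
    {g g' : V → Bool} (hgg' : ∀ j ∈ X, g j = g' j) : dickeAmp O X g = dickeAmp O X g' := by
  have piecewise_mem : ∀ {g g' : V → Bool}, (∀ j ∈ X, g j = g' j) →
      ∀ f ∈ localMoves X g, X.piecewise f g' ∈ localMoves X g' := by
    intro g g' hgg' f hf
    rw [mem_localMoves] at hf ⊢
    refine ⟨fun j hj => piecewise_eq_of_notMem _ _ _ hj, ?_⟩
    rw [weightOn_congr fun j hj => piecewise_eq_of_mem _ _ _ hj, hf.2, weightOn_congr hgg']
  have piecewise_piecewise : ∀ {g g' : V → Bool},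
      ∀ f ∈ localMoves X g, X.piecewise (X.piecewise f g') g = f := by
    intro g g' f hf
    funext j
    by_cases hj : j ∈ X <;> simp [hj, (mem_localMoves.mp hf).1 j]
  refine sum_nbij' (fun f => X.piecewise f g') (fun f => X.piecewise f g)
    (piecewise_mem hgg') (piecewise_mem fun j hj => (hgg' j hj).symm)
    piecewise_piecewise piecewise_piecewise fun f hf => ?_
  exact hO.2 f _ g g' (fun j hj => (piecewise_eq_of_mem _ _ _ hj).symm) hgg'
    (mem_localMoves.mp hf).1 fun j hj => piecewise_eq_of_notMem _ _ _ hj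

end States

section StarNbhd

variable {V ι : Type*} [DecidableEq V] [Fintype ι]

def starNbhd (X : ι → Finset V) (i : V) : Finset V :=
  insert i ((univ.filter fun t => i ∈ X t).biUnion fun t => (X t).erase i)

lemma subset_starNbhd {X : ι → Finset V} {i : V} {t : ι} (hi : i ∈ X t) :
    X t ⊆ starNbhd X i := by
  intro j hj
  by_cases hji : j = i
  · simp [starNbhd, hji]
  · exact mem_insert_of_mem (mem_biUnion.mpr ⟨t, by simpa using hi, mem_erase.mpr ⟨hji, hj⟩⟩)

lemma card_starNbhd_le {X : ι → Finset V} {i : V} {k T : ℕ} (hcard : ∀ t, #(X t) ≤ k)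
    (hdeg : #(univ.filter fun t => i ∈ X t) ≤ T) : #(starNbhd X i) ≤ T * (k - 1) + 1 := by
  calc #(starNbhd X i)
      ≤ #((univ.filter fun t => i ∈ X t).biUnion fun t => (X t).erase i) + 1 :=
        card_insert_le _ _
    _ ≤ #(univ.filter fun t => i ∈ X t) * (k - 1) + 1 := by
        gcongr
        refine card_biUnion_le_card_mul _ _ _ fun t ht => ?_
        rw [card_erase_of_mem (mem_filter.mp ht).2]
        exact Nat.sub_le_sub_right (hcard t) 1
    _ ≤ T * (k - 1) + 1 := by gcongr

lemma sum_update_sub_sum_congr {M : Type*} [AddCommGroup M] {X : ι → Finset V}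
    {c : ι → (V → Bool) → M} (hc : ∀ t g g', (∀ j ∈ X t, g j = g' j) → c t g = c t g')
    {i : V} (b : Bool) {g g' : V → Bool} (hgg' : ∀ j ∈ starNbhd X i, g j = g' j) :
    ∑ t, c t (Function.update g i b) - ∑ t, c t g
      = ∑ t, c t (Function.update g' i b) - ∑ t, c t g' := by
  simp only [← sum_sub_distrib]
  refine sum_congr rfl fun t _ => ?_
  by_cases hi : i ∈ X t
  · have hsub := subset_starNbhd hi
    rw [hc t g g' fun j hj => hgg' j (hsub hj),
      hc t (Function.update g i b) (Function.update g' i b) fun j hj => ?_]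
    by_cases hji : j = i
    · simp [hji]
    · simp [Function.update_of_ne hji, hgg' j (hsub hj)]
  · have hupd : ∀ g : V → Bool, c t (Function.update g i b) = c t g := fun g =>
      hc t _ _ fun j hj => Function.update_of_ne (by rintro rfl; exact hi hj) _ _
    rw [hupd, hupd, sub_self, sub_self]

end StarNbhd

lemma eq_add_mul_of_sub_eq {R : Type*} [CommRing R] {E : ℕ → R} {N : ℕ} {d : R}
    (h : ∀ p, p + 1 ≤ N → E (p + 1) - E p = d) : ∀ p ≤ N, E p = E 0 + d * p := by
  intro p hp
  induction p with
  | zero => simp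
  | succ p ih =>
    push_cast
    linear_combination h p hp + ih (by omega)

section Spectrum

variable {V ι : Type*} [Fintype V] [DecidableEq V] [Fintype ι]
  {h : ι → Module.End ℂ (QState V)} {X : ι → Finset V} {E : ℕ → ℂ}

lemma eigenvalue_weight_eq_sum_dickeAmp (hsupp : ∀ t, SupportedOn (h t) ↑(X t))
    (hE : ∀ p ≤ Fintype.card V, (∑ t, h t) (WState V p) = E p • WState V p) (g : V → Bool) :
    E (weight g) = ∑ t, dickeAmp (h t) (X t) g := by
  have hg := congrFun (hE (weight g) (weight_le_card g)) g
  rw [LinearMap.sum_apply, Finset.sum_apply, Pi.smul_apply, WState_apply, if_pos rfl,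
    smul_eq_mul] at hg
  simp only [apply_WState_weight (hsupp _), ← mul_sum] at hg
  have hfac : ((weight g) ! : ℂ) ≠ 0 := Nat.cast_ne_zero.mpr (Nat.factorial_ne_zero _)
  exact (mul_left_cancel₀ hfac (hg.trans (mul_comm _ _))).symm

lemma eigenvalue_spacing_congr (hsupp : ∀ t, SupportedOn (h t) ↑(X t))
    (hE : ∀ p ≤ Fintype.card V, (∑ t, h t) (WState V p) = E p • WState V p) {i : V}
    {g g' : V → Bool} (hgi : g i = false) (hgg' : ∀ j ∈ starNbhd X i, g j = g' j) :
    E (weight g + 1) - E (weight g) = E (weight g' + 1) - E (weight g') := by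
  have hg'i : g' i = false := (hgg' i (mem_insert_self _ _)).symm.trans hgi
  rw [← weight_update_true hgi, ← weight_update_true hg'i]
  simp only [eigenvalue_weight_eq_sum_dickeAmp hsupp hE]
  exact sum_update_sub_sum_congr (fun t _ _ => dickeAmp_congr (hsupp t)) true hgg'

lemma eigenvalue_spacing_eq (hsupp : ∀ t, SupportedOn (h t) ↑(X t))
    (hE : ∀ p ≤ Fintype.card V, (∑ t, h t) (WState V p) = E p • WState V p) {i : V}
    (hZ : 2 * #(starNbhd X i) ≤ Fintype.card V + 1) {p : ℕ} (hp : p + 1 ≤ Fintype.card V) :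
    E (p + 1) - E p = E 1 - E 0 := by
  set Z := starNbhd X i
  have hiZ : i ∈ Z := mem_insert_self _ _
  have hZc : #Zᶜ = Fintype.card V - #Z := card_compl Z
  have hZpos : 0 < #Z := card_pos.mpr ⟨i, hiZ⟩
  have low : ∀ q, q + #Z ≤ Fintype.card V → E (q + 1) - E q = E 1 - E 0 := by
    have hweightOn : weightOn Z (fun _ => false) = 0 := by simp [weightOn]
    have exists_empty : ∀ q, q + #Z ≤ Fintype.card V →
        ∃ g : V → Bool, weight g = q ∧ ∀ j ∈ Z, g j = false := fun q hq =>
      exists_weight_eq_and_eqOn Z _ (by omega) (by omega)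
    intro q hq
    obtain ⟨g, rfl, hg⟩ := exists_empty q hq
    obtain ⟨g₀, hg₀w, hg₀⟩ := exists_empty 0 (by omega)
    simpa [hg₀w] using eigenvalue_spacing_congr hsupp hE (hg i hiZ)
      fun j hj => (hg j hj).trans (hg₀ j hj).symm
  have high : ∀ q, #Z - 1 ≤ q → q + 1 ≤ Fintype.card V →
      E (q + 1) - E q = E #Z - E (#Z - 1) := by
    have hweightOn : weightOn Z (fun j => decide (j ≠ i)) = #Z - 1 := by
      rw [weightOn, ← card_erase_of_mem hiZ]
      congr 1
      ext j
      simp [and_comm]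
    have exists_full : ∀ q, #Z - 1 ≤ q → q + 1 ≤ Fintype.card V →
        ∃ g : V → Bool, weight g = q ∧ ∀ j ∈ Z, g j = decide (j ≠ i) := fun q hq₁ hq₂ =>
      exists_weight_eq_and_eqOn Z _ (by omega) (by omega)
    intro q hq₁ hq₂
    obtain ⟨g, rfl, hg⟩ := exists_full q hq₁ hq₂
    obtain ⟨g₁, hg₁w, hg₁⟩ := exists_full (#Z - 1) le_rfl (by omega)
    have := eigenvalue_spacing_congr hsupp hE (by simpa using hg i hiZ)
      fun j hj => (hg j hj).trans (hg₁ j hj).symm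
    rwa [hg₁w, Nat.sub_add_cancel hZpos] at this
  by_cases hpZ : p + #Z ≤ Fintype.card V
  · exact low p hpZ
  · have hmid := low (#Z - 1) (by omega)
    rw [Nat.sub_add_cancel hZpos] at hmid
    rw [high p (by omega) hp, hmid]

theorem exists_eigenvalue_eq_add_mul (hsupp : ∀ t, SupportedOn (h t) ↑(X t))
    (hE : ∀ p ≤ Fintype.card V, (∑ t, h t) (WState V p) = E p • WState V p) (i : V)
    (hZ : 2 * #(starNbhd X i) ≤ Fintype.card V + 1) :
    ∃ Ω ω : ℂ, ∀ p ≤ Fintype.card V, E p = Ω + ω * p :=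
  ⟨E 0, E 1 - E 0, eq_add_mul_of_sub_eq fun _ hp => eigenvalue_spacing_eq hsupp hE hZ hp⟩

end Spectrum

end Dicke

theorem low_density_equal_spacing_general
    {V : Type*} [Fintype V] [DecidableEq V]
    (k Tmax : ℕ) (hk : 2 ≤ k)
    (n : ℕ) (h : Fin n → Module.End ℂ (QState V)) (X : Fin n → Finset V)
    (hsupp : ∀ t, SupportedOn (h t) ↑(X t))
    (hcard : ∀ t, (X t).card ≤ k)
    (hdensity : ∀ i : V, (Finset.univ.filter (fun t => i ∈ X t)).card ≤ Tmax)
    (hbig : 2 * k * (((k - 1) * Tmax) ^ 8 + 1) < Fintype.card V)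
    (E : ℕ → ℂ)
    (hE : ∀ p ≤ Fintype.card V, (∑ t, h t) (WState V p) = E p • WState V p) :
    ∃ Ω ω : ℂ, ∀ p ≤ Fintype.card V, E p = Ω + ω * p := by
  obtain ⟨i⟩ : Nonempty V := Fintype.card_pos_iff.mp (by omega)
  refine Dicke.exists_eigenvalue_eq_add_mul hsupp hE i ?_
  have hZ := Dicke.card_starNbhd_le hcard (hdensity i)
  have hpow : Tmax * (k - 1) ≤ ((k - 1) * Tmax) ^ 8 := by
    rw [mul_comm]
    exact Nat.le_self_pow (by norm_num) _
  have hk' : 2 * (((k - 1) * Tmax) ^ 8 + 1) ≤ 2 * k * (((k - 1) * Tmax) ^ 8 + 1) := by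
    gcongr
    omega
  omega

/-- Equal spacing of the Dicke tower for "low-density" Hamiltonians:
each term is supported on at most k sites and each site belongs to at most T_max terms. -/
theorem low_density_equal_spacing
    {V : Type*} [Fintype V] [DecidableEq V]
    (k Tmax : ℕ) (hk : 2 ≤ k) (hT : 1 ≤ Tmax)
    (n : ℕ) (h : Fin n → Module.End ℂ (QState V)) (X : Fin n → Finset V)
    (hsupp : ∀ t, SupportedOn (h t) ↑(X t))
    (hcard : ∀ t, (X t).card ≤ k)
    (hdensity : ∀ i : V, (Finset.univ.filter (fun t => i ∈ X t)).card ≤ Tmax)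
    (hconn : (inducedGraph X).Connected)
    (hbig : 2 * k * (((k - 1) * Tmax) ^ 8 + 1) < Fintype.card V)
    (E : ℕ → ℂ)
    (hE : ∀ p ≤ Fintype.card V, (∑ t, h t) (WState V p) = E p • WState V p) :
    ∃ Ω ω : ℂ, ∀ p ≤ Fintype.card V, E p = Ω + ω * p :=
  low_density_equal_spacing_general k Tmax hk n h X hsupp hcard hdensity hbig E hE
end
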